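/- arXiv:1809.00356 — 7 statements merged into one kernel-verified Lean document; each statement's English description precedes it below -/
import Mathlib

section
/- Every locally solvable periodic group is locally finite. -/
/-!
A finitely generated periodic solvable group is finite, by induction on the derived length: its
abelianization is a finitely generated torsion abelian group, hence finite, so the commutator
subgroup has finite index; by Schreier's lemma it is then finitely generated, and it is periodic
of smaller derived length.
-/

namespace Group

variable {G : Type*} [Group G]

theorem map_subtype_derivedSeries_commutator_le (n : ℕ) :
    (derivedSeries (commutator G) n).map (commutator G).subtype ≤ derivedSeries G (n + 1) := by
  induction n with
  | zero =>
    rw [derivedSeries_zero, ← MonoidHom.range_eq_map, Subgroup.range_subtype, derivedSeries_one]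
  | succ n ih =>
    rw [derivedSeries_succ, Subgroup.map_commutator, derivedSeries_succ]
    exact Subgroup.commutator_mono ih ih

theorem derivedSeries_commutator_eq_bot {n : ℕ} (h : derivedSeries G (n + 1) = ⊥) :
    derivedSeries (commutator G) n = ⊥ := by
  have hle := map_subtype_derivedSeries_commutator_le (G := G) n
  rwa [h, le_bot_iff, Subgroup.map_eq_bot_iff_of_injective _ (Subgroup.subtype_injective _)]
    at hle

theorem finiteIndex_commutator_of_isMulTorsion [FG G] (hG : IsMulTorsion G) :
    (commutator G).FiniteIndex := by
  have hsurj : Function.Surjective (Abelianization.of : G →* Abelianization G) :=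
    QuotientGroup.mk'_surjective _
  have : FG (Abelianization G) := fg_of_surjective hsurj
  have : Finite (G ⧸ commutator G) :=
    CommGroup.finite_of_fg_isMulTorsion (Abelianization G) (hG.of_surjective hsurj)
  exact Subgroup.finiteIndex_of_finite_quotient

theorem finite_of_isMulTorsion_of_derivedSeries_eq_bot (n : ℕ) :
    ∀ {G : Type*} [Group G] [FG G], IsMulTorsion G → derivedSeries G n = ⊥ → Finite G := by
  induction n with
  | zero =>
    intro G _ _ _ h
    have : Subsingleton G := Subgroup.subsingleton_iff.mp (subsingleton_of_bot_eq_top h.symm)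
    exact Finite.of_subsingleton
  | succ n ih =>
    intro G _ _ hG h
    have := finiteIndex_commutator_of_isMulTorsion hG
    have : FG (commutator G) := Subgroup.fg_of_index_ne_zero _
    have : Finite (commutator G) :=
      ih (hG.subgroup _) (derivedSeries_commutator_eq_bot h)
    exact Finite.of_subgroup_quotient (commutator G)

theorem IsSolvable.finite_of_isMulTorsion [IsSolvable G] [FG G] (hG : IsMulTorsion G) :
    Finite G :=
  have ⟨n, hn⟩ := IsSolvable.solvable (G := G)
  finite_of_isMulTorsion_of_derivedSeries_eq_bot n hG hn

end Group

/-- Every locally solvable periodic group is locally finite. -/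
theorem locallySolvable_periodic_isLocallyFinite {G : Type*} [Group G]
    (hsol : ∀ S : Set G, S.Finite → IsSolvable ↥(Subgroup.closure S))
    (htor : ∀ g : G, IsOfFinOrder g) :
    ∀ S : Set G, S.Finite → Finite ↥(Subgroup.closure S) := by
  intro S hS
  have : Group.IsSolvable (Subgroup.closure S) := hsol S hS
  have : Group.FG (Subgroup.closure S) := @Group.closure_finite_fg _ _ S hS.to_subtype
  exact Group.IsSolvable.finite_of_isMulTorsion (IsMulTorsion.subgroup htor _)
end

section
/- Let G be a finitely generated solvable periodic group. Then G is finite. -/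
/-! The abelianization of a finitely generated periodic group is a finitely generated abelian
torsion group, hence finite; so the commutator subgroup has finite index and, by Schreier's lemma,
is again finitely generated and periodic. Iterating, every term of the derived series has finite
index, and for a solvable group one of these terms is trivial. -/

section

variable {G : Type*} [Group G]

theorem finiteIndex_commutator_of_fg_of_isMulTorsion [Group.FG G] (hG : IsMulTorsion G) :
    (commutator G).FiniteIndex := by
  have hsurj : Function.Surjective (Abelianization.of : G →* Abelianization G) :=
    QuotientGroup.mk_surjective
  have : Group.FG (Abelianization G) := Group.fg_of_surjective hsurj
  have : Finite (G ⧸ commutator G) :=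
    CommGroup.finite_of_fg_isMulTorsion (G := Abelianization G) (hG.of_surjective hsurj)
  exact Subgroup.finiteIndex_of_finite_quotient

theorem finiteIndex_derivedSeries_of_fg_of_isMulTorsion [Group.FG G] (hG : IsMulTorsion G)
    (n : ℕ) : (derivedSeries G n).FiniteIndex := by
  induction n with
  | zero => rw [derivedSeries_zero]; infer_instance
  | succ n ih =>
    set H := derivedSeries G n
    -- `H` is finitely generated by Schreier's lemma (`Subgroup.fg_of_index_ne_zero`, an instance).
    have := finiteIndex_commutator_of_fg_of_isMulTorsion (hG.subgroup H)
    rw [derivedSeries_succ, ← H.map_subtype_commutator, Subgroup.finiteIndex_iff,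
      Subgroup.index_map_subtype]
    exact mul_ne_zero this.index_ne_zero ih.index_ne_zero

end

/-- A finitely generated solvable periodic group is finite. -/
theorem fg_solvable_periodic_finite {G : Type*} [Group G]
    (hfg : Group.FG G) (hsol : IsSolvable G) (htor : ∀ g : G, IsOfFinOrder g) :
    Finite G := by
  obtain ⟨n, hn⟩ := hsol.solvable
  have hfin := finiteIndex_derivedSeries_of_fg_of_isMulTorsion htor n
  rw [hn, Subgroup.finiteIndex_iff, Subgroup.index_bot] at hfin
  exact Nat.finite_of_card_ne_zero hfin
end

section
/- Let D be a division ring with center F, and let M be a subgroup of the unit group of the matrix ring M_n(D) such that the quotient M/(M ∩ F*) is a locally finite group. Then the F-subalgebra F[M] of M_n(D) generated by M is a locally finite-dimensional F-vector space, i.e., every finite subset of F[M] is contained in a finite-dimensional F-subspace that is a subring. -/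
/-!
Because `M` is a group, `F[M]` is just the `F`-span of `M`, so a finite subset of `F[M]` already
lies in the span of a finitely generated subgroup `H ≤ M`. Local finiteness of `M` modulo scalars
covers `H` by finitely many scalar multiples `z u` of units `u ∈ U`, so the subalgebra `F[H]`
is spanned over `F` by the finite set `U`.
-/

/-- The subgroup `F* · I_n` of scalar matrices with central entries, inside the
unit group of the matrix ring `M_n(D)`. -/
noncomputable def centralScalarUnits (D : Type*) [DivisionRing D] (n : ℕ) :
    Subgroup (Matrix (Fin n) (Fin n) D)ˣ :=
  (Units.map ((Matrix.scalar (Fin n)).comp (Subring.center D).subtype).toMonoidHom).range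

section

open Algebra Submodule

variable {R A : Type*} [CommSemiring R] [Semiring A] [Algebra R A]

theorem Subgroup.closure_val_image_le_ofUnits (T : Set Aˣ) :
    Submonoid.closure (Units.val '' T) ≤ (Subgroup.closure T).ofUnits :=
  Submonoid.closure_le.2 <| Set.image_mono Subgroup.subset_closure

theorem Algebra.adjoin_val_image_toSubmodule (G : Subgroup Aˣ) :
    Subalgebra.toSubmodule (adjoin R (Units.val '' (G : Set Aˣ))) =
      span R (Units.val '' (G : Set Aˣ)) := by
  rw [adjoin_eq_span]
  exact congrArg (fun H : Submonoid A => span R (H : Set A)) (Submonoid.closure_eq G.ofUnits)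

theorem Subgroup.exists_finite_subset_of_subset_adjoin_val_image (G : Subgroup Aˣ) {S : Set A}
    (hS : S.Finite) (hSG : S ⊆ adjoin R (Units.val '' (G : Set Aˣ))) :
    ∃ T : Set Aˣ, T.Finite ∧ T ⊆ G ∧ S ⊆ adjoin R (Units.val '' T) := by
  have hS_span : (hS.toFinset : Set A) ⊆ span R (Units.val '' (G : Set Aˣ)) := by
    rw [← adjoin_val_image_toSubmodule, hS.coe_toFinset]
    exact hSG
  obtain ⟨T₀, hT₀G, hST₀⟩ := subset_span_finite_of_subset_span hS_span
  have hT₀_fin : (Units.val ⁻¹' (T₀ : Set A)).Finite :=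
    T₀.finite_toSet.preimage Units.val_injective.injOn
  refine ⟨G ∩ Units.val ⁻¹' T₀, hT₀_fin.inter_of_right _, Set.inter_subset_left, ?_⟩
  have hT₀ : (T₀ : Set A) ⊆ Units.val '' (G ∩ Units.val ⁻¹' T₀) := by
    intro x hx
    obtain ⟨y, hyG, rfl⟩ := hT₀G hx
    exact ⟨y, ⟨hyG, hx⟩, rfl⟩
  rw [hS.coe_toFinset] at hST₀
  exact hST₀.trans <| (span_mono hT₀).trans (span_le_adjoin R _)

theorem Algebra.adjoin_toSubmodule_le_span {s U : Set A}
    (h : ∀ x ∈ Submonoid.closure s, ∃ u ∈ U, ∃ c : R, x = c • u) :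
    Subalgebra.toSubmodule (adjoin R s) ≤ span R U := by
  rw [adjoin_eq_span, span_le]
  intro x hx
  obtain ⟨u, hu, c, rfl⟩ := h x hx
  exact smul_mem _ c (subset_span hu)

end

section

variable {D : Type*} [DivisionRing D] {n : ℕ}

theorem range_scalar_center_eq_range_algebraMap :
    (Set.range fun a : Subring.center D => Matrix.scalar (Fin n) (a : D)) =
      Set.range (algebraMap (Subring.center D) (Matrix (Fin n) (Fin n) D)) := rfl

theorem exists_eq_smul_of_mem_centralScalarUnits {z : (Matrix (Fin n) (Fin n) D)ˣ}
    (hz : z ∈ centralScalarUnits D n) (x : Matrix (Fin n) (Fin n) D) :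
    ∃ c : Subring.center D, (z : Matrix (Fin n) (Fin n) D) * x = c • x := by
  obtain ⟨w, rfl⟩ := hz
  exact ⟨w, (Algebra.smul_def _ _).symm⟩

end

/-- If `M/(M ∩ F*)` is locally finite, then `F[M]` is a locally finite-dimensional
`F`-vector space: every finite subset of `F[M]` lies in a finite-dimensional
`F`-subspace of `F[M]` which is a subring. -/
theorem locallyFiniteDimensional_of_locallyFinite_mod_center
    {D : Type*} [DivisionRing D] (n : ℕ)
    (M : Subgroup (Matrix (Fin n) (Fin n) D)ˣ)
    (hLF : ∀ S : Set (Matrix (Fin n) (Fin n) D)ˣ, S.Finite → S ⊆ (M : Set _) →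
      ∃ U : Set (Matrix (Fin n) (Fin n) D)ˣ, U.Finite ∧
        ∀ x ∈ Subgroup.closure S, ∃ u ∈ U, ∃ z ∈ centralScalarUnits D n, x = z * u) :
    ∀ S : Set (Matrix (Fin n) (Fin n) D), S.Finite →
      S ⊆ (Subring.closure
        ((Set.range fun a : Subring.center D => Matrix.scalar (Fin n) (a : D)) ∪
          (Units.val '' (M : Set (Matrix (Fin n) (Fin n) D)ˣ))) : Set _) →
      ∃ (R' : Subring (Matrix (Fin n) (Fin n) D)) (t : Finset (Matrix (Fin n) (Fin n) D)),
        S ⊆ (R' : Set _) ∧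
        (R' : Set _) ⊆ (Subring.closure
          ((Set.range fun a : Subring.center D => Matrix.scalar (Fin n) (a : D)) ∪
            (Units.val '' (M : Set (Matrix (Fin n) (Fin n) D)ˣ))) : Set (Matrix (Fin n) (Fin n) D)) ∧
        (R' : Set _) ⊆ ((Submodule.span (Subring.center D) (t : Set (Matrix (Fin n) (Fin n) D)) : Submodule (Subring.center D) (Matrix (Fin n) (Fin n) D)) : Set (Matrix (Fin n) (Fin n) D)) := by
  intro S hS hSM
  rw [range_scalar_center_eq_range_algebraMap, ← Algebra.adjoin_eq_ring_closure] at hSM ⊢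
  obtain ⟨T, hT, hTM, hST⟩ := M.exists_finite_subset_of_subset_adjoin_val_image hS hSM
  obtain ⟨U, hU, hTU⟩ := hLF T hT hTM
  refine ⟨(Algebra.adjoin (Subring.center D) (Units.val '' T)).toSubring,
    (hU.image Units.val).toFinset, hST, Algebra.adjoin_mono (Set.image_mono hTM), ?_⟩
  rw [Set.Finite.coe_toFinset]
  refine Algebra.adjoin_toSubmodule_le_span fun x hx => ?_
  obtain ⟨y, hy, rfl⟩ := Subgroup.closure_val_image_le_ofUnits T hx
  obtain ⟨u, hu, z, hz, rfl⟩ := hTU y hy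
  obtain ⟨c, hc⟩ := exists_eq_smul_of_mem_centralScalarUnits hz (u : Matrix (Fin n) (Fin n) D)
  exact ⟨u, Set.mem_image_of_mem _ hu, c, hc⟩
end

section
/- Let G be a group whose center Z(G) has finite index in G. Then the commutator subgroup G' is finite. -/
/-! A commutator `⁅a, b⁆` only depends on the cosets of `a` and `b` modulo the center, so a
group whose center has finite index has only finitely many commutators. Mathlib's form of
Schur's theorem (via Schreier's lemma) then bounds the commutator subgroup in terms of the number
of commutators. -/

open scoped commutatorElement

namespace Subgroup

variable {G : Type*} [Group G] {z : G}

theorem commutatorElement_mul_mem_center_left (hz : z ∈ center G) (a b : G) :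
    ⁅a * z, b⁆ = ⁅a, b⁆ := by
  rw [commutatorElement_def, commutatorElement_def, mul_inv_rev, mul_assoc a z b,
    ← mem_center_iff.mp hz b]
  group

theorem commutatorElement_mul_mem_center_right (hz : z ∈ center G) (a b : G) :
    ⁅a, b * z⁆ = ⁅a, b⁆ := by
  rw [← commutatorElement_inv, commutatorElement_mul_mem_center_left hz, commutatorElement_inv]

theorem commutatorElement_out_out (a b : G) :
    ⁅(a : G ⧸ center G).out, (b : G ⧸ center G).out⁆ = ⁅a, b⁆ := by
  obtain ⟨z, hz⟩ := QuotientGroup.mk_out_eq_mul (center G) a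
  obtain ⟨w, hw⟩ := QuotientGroup.mk_out_eq_mul (center G) b
  rw [hz, hw, commutatorElement_mul_mem_center_left z.2,
    commutatorElement_mul_mem_center_right w.2]

theorem finite_commutatorSet_of_finite_quotient_center (h : Finite (G ⧸ center G)) :
    Finite (commutatorSet G) := by
  refine Set.Finite.subset (Set.finite_range fun q : (G ⧸ center G) × (G ⧸ center G) =>
    ⁅q.1.out, q.2.out⁆) ?_
  rintro _ ⟨a, b, rfl⟩
  exact ⟨(a, b), commutatorElement_out_out a b⟩

end Subgroup

/-- Schur's theorem: if the center has finite index, then the commutator subgroup is finite. -/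
theorem commutator_finite_of_center_finiteIndex {G : Type*} [Group G]
    (h : Finite (G ⧸ Subgroup.center G)) :
    Finite ↥(commutator G) :=
  have := Subgroup.finite_commutatorSet_of_finite_quotient_center h
  inferInstance
end

section
/- Let D be a division ring with center F and suppose M is an abelian-by-finite subgroup of D* containing F*, with an abelian normal subgroup N of finite index k such that the division subring L = F(N) generated by F and N is a subfield of D normalized by M. If x₁,...,x_k is a transversal of N in M, then Δ = L·x₁ + ... + L·x_k is a division subring of D containing F and M, and Δ is finite-dimensional over L (of dimension at most k). -/
/-!
Write `Δ` for the `L`-span of the transversal. Every `m ∈ M` is `n * xᵢ` with `n ∈ N ⊆ L`,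
so `M ⊆ Δ`, and in particular `1 ∈ Δ`, `F ⊆ L ⊆ Δ` and `xᵢ xⱼ ∈ Δ`. Since `xᵢ` normalizes
`L`, `xᵢ (l y) = (xᵢ l xᵢ⁻¹) (xᵢ y)`, so left multiplication by `xᵢ` preserves `Δ`, and hence
`Δ` is closed under multiplication. Finally `Δ` is a finite-dimensional left `L`-space
without zero divisors: right multiplication by `d ≠ 0` is an injective `L`-linear
endomorphism of `Δ`, hence surjective, and a preimage of `1` is `d⁻¹`.
-/

open Submodule

namespace Subfield

variable {D : Type*} [DivisionRing D] (L : Subfield D)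

theorem mul_mem_span_of_conj_mem {S : Set D} {s : D} (hs : ∀ l ∈ L, s * l * s⁻¹ ∈ L)
    (hsS : ∀ t ∈ S, s * t ∈ span L S) {b : D} (hb : b ∈ span L S) : s * b ∈ span L S := by
  induction hb using Submodule.span_induction with
  | mem t ht => exact hsS t ht
  | zero => simp
  | add y z _ _ hy hz => rw [mul_add]; exact add_mem hy hz
  | smul l y _ hy =>
    have hconj : s * l * s⁻¹ * s = s * l := by
      rcases eq_or_ne s 0 with rfl | hs0
      · simp
      · rw [inv_mul_cancel_right₀ hs0]
    have : s * (l • y) = (⟨_, hs l l.2⟩ : L) • (s * y) := by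
      change s * (l * y) = s * l * s⁻¹ * (s * y)
      rw [← mul_assoc, ← mul_assoc, hconj]
    rw [this]
    exact smul_mem _ _ hy

theorem mul_mem_span {S : Set D} (hS : ∀ s ∈ S, ∀ l ∈ L, s * l * s⁻¹ ∈ L)
    (hSS : ∀ s ∈ S, ∀ t ∈ S, s * t ∈ span L S) {a b : D} (ha : a ∈ span L S)
    (hb : b ∈ span L S) : a * b ∈ span L S := by
  induction ha using Submodule.span_induction with
  | mem s hs => exact L.mul_mem_span_of_conj_mem (hS s hs) (hSS s hs) hb
  | zero => simp
  | add y z _ _ hy hz => rw [add_mul]; exact add_mem hy hz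
  | smul l y _ hy =>
    change l * y * b ∈ _
    rw [mul_assoc]
    exact smul_mem _ l hy

theorem units_mem_span_of_mul_inv_mem {S : Set D} {m u : Dˣ} (hmu : ((m * u⁻¹ : Dˣ) : D) ∈ L)
    (hu : (u : D) ∈ S) : (m : D) ∈ span L S := by
  have : (m : D) = (⟨_, hmu⟩ : L) • (u : D) := by
    change (m : D) = ((m * u⁻¹ : Dˣ) : D) * u
    rw [← Units.val_mul, inv_mul_cancel_right]
  rw [this]
  exact smul_mem _ _ (subset_span hu)

theorem inv_mem_of_finiteDimensional (V : Submodule L D) [FiniteDimensional L V] (hone : 1 ∈ V)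
    (hmul : ∀ a ∈ V, ∀ b ∈ V, a * b ∈ V) {d : D} (hd : d ∈ V) : d⁻¹ ∈ V := by
  rcases eq_or_ne d 0 with rfl | hd0
  · simp
  let mulRight : V →ₗ[L] V := (LinearMap.mulRight L d).restrict fun a ha => hmul a ha d hd
  have hinj : Function.Injective mulRight := fun a b hab =>
    Subtype.ext (mul_right_cancel₀ hd0 (congrArg Subtype.val hab))
  obtain ⟨a, ha⟩ := LinearMap.injective_iff_surjective.mp hinj ⟨1, hone⟩
  have had : (a : D) * d = 1 := congrArg Subtype.val ha
  exact eq_inv_of_mul_eq_one_left had ▸ a.2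

theorem exists_subring_coe_eq (V : Submodule L D) (hone : 1 ∈ V)
    (hmul : ∀ a ∈ V, ∀ b ∈ V, a * b ∈ V) : ∃ R : Subring D, (R : Set D) = V :=
  ⟨{ V.toAddSubgroup with
      mul_mem' := fun ha hb => hmul _ ha _ hb
      one_mem' := hone }, rfl⟩

end Subfield

theorem divisionSubring_of_abelianByFinite_general {D : Type*} [DivisionRing D]
    (M N : Subgroup Dˣ)
    (L : Subfield D)
    (hL : L = Subfield.closure ((Subring.center D : Set D) ∪ (Units.val '' (N : Set Dˣ))))
    (hLnorm : ∀ m ∈ M, ∀ l ∈ L, (m : D) * l * ((m⁻¹ : Dˣ) : D) ∈ L)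
    (k : ℕ) (x : Fin k → Dˣ) (hxM : ∀ i, x i ∈ M)
    (hxT : ∀ m ∈ M, ∃! i : Fin k, m * (x i)⁻¹ ∈ N) :
    -- Δ is the L-span of x₁, …, x_k
    ∀ Δ : Submodule L D, Δ = Submodule.span L (Set.range fun i => ((x i : Dˣ) : D)) →
      (∃ R' : Subring D, (R' : Set D) = (Δ : Set D)) ∧
      (∀ d ∈ Δ, d ≠ 0 → d⁻¹ ∈ Δ) ∧
      (∀ f ∈ Subring.center D, f ∈ Δ) ∧
      (∀ m ∈ M, ((m : Dˣ) : D) ∈ Δ) ∧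
      Module.rank L Δ ≤ k := by
  rintro _ rfl
  set Δ := span L (Set.range fun i => ((x i : Dˣ) : D))
  have hNL : ∀ n ∈ N, ((n : Dˣ) : D) ∈ L := fun n hn =>
    hL ▸ Subfield.subset_closure (.inr ⟨n, hn, rfl⟩)
  have hFL : ∀ f ∈ Subring.center D, f ∈ L := fun f hf =>
    hL ▸ Subfield.subset_closure (.inl hf)
  have hMΔ : ∀ m ∈ M, ((m : Dˣ) : D) ∈ Δ := fun m hm =>
    have ⟨i, hi, _⟩ := hxT m hm
    L.units_mem_span_of_mul_inv_mem (hNL _ hi) ⟨i, rfl⟩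
  have hmul : ∀ a ∈ Δ, ∀ b ∈ Δ, a * b ∈ Δ := fun a ha b hb =>
    L.mul_mem_span (by rintro _ ⟨i, rfl⟩ l hl; simpa using hLnorm _ (hxM i) l hl)
      (by rintro _ ⟨i, rfl⟩ _ ⟨j, rfl⟩; exact hMΔ _ (mul_mem (hxM i) (hxM j))) ha hb
  have hone : (1 : D) ∈ Δ := by simpa using hMΔ 1 M.one_mem
  have : FiniteDimensional L Δ := FiniteDimensional.span_of_finite L (Set.finite_range _)
  refine ⟨L.exists_subring_coe_eq Δ hone hmul,
    fun d hd _ => L.inv_mem_of_finiteDimensional Δ hone hmul hd,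
    fun f hf => mul_one f ▸ Δ.smul_mem ⟨f, hFL f hf⟩ hone, hMΔ, ?_⟩
  exact (rank_span_le _).trans (by simpa using Cardinal.mk_range_le_lift (f := fun i => (x i : D)))

/-- Let `D` be a division ring with center `F` and `M ≤ Dˣ` abelian-by-finite containing
`F*`, with an abelian normal subgroup `N` of finite index `k` such that the division
subring `L = F(N)` is a (commutative) subfield of `D` normalized by `M`.  If
`x₁, …, x_k` is a transversal of `N` in `M`, then `Δ = L·x₁ + ⋯ + L·x_k` is a division
subring of `D` containing `F` and `M`, of dimension at most `k` over `L`. -/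
theorem divisionSubring_of_abelianByFinite {D : Type*} [DivisionRing D]
    (M N : Subgroup Dˣ)
    (hF : ∀ u : Dˣ, (u : D) ∈ Subring.center D → u ∈ M)
    (hNM : N ≤ M) (hNnormal : (N.subgroupOf M).Normal)
    (hNab : ∀ a ∈ N, ∀ b ∈ N, a * b = b * a)
    (L : Subfield D)
    (hL : L = Subfield.closure ((Subring.center D : Set D) ∪ (Units.val '' (N : Set Dˣ))))
    (hLcomm : ∀ x ∈ L, ∀ y ∈ L, x * y = y * x)
    (hLnorm : ∀ m ∈ M, ∀ l ∈ L, (m : D) * l * ((m⁻¹ : Dˣ) : D) ∈ L)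
    (k : ℕ) (x : Fin k → Dˣ) (hxM : ∀ i, x i ∈ M)
    (hxT : ∀ m ∈ M, ∃! i : Fin k, m * (x i)⁻¹ ∈ N) :
    -- Δ is the L-span of x₁, …, x_k
    ∀ Δ : Submodule L D, Δ = Submodule.span L (Set.range fun i => ((x i : Dˣ) : D)) →
      (∃ R' : Subring D, (R' : Set D) = (Δ : Set D)) ∧
      (∀ d ∈ Δ, d ≠ 0 → d⁻¹ ∈ Δ) ∧
      (∀ f ∈ Subring.center D, f ∈ Δ) ∧
      (∀ m ∈ M, ((m : Dˣ) : D) ∈ Δ) ∧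
      Module.rank L Δ ≤ k :=
  divisionSubring_of_abelianByFinite_general M N L hL hLnorm k x hxM hxT
end

section
/- Let D be a division ring with center F, G a subnormal subgroup of D*, and M a non-abelian solvable maximal subgroup of G, with K a maximal subfield of D such that M/(K* ∩ G) ≅ Z/pZ for a prime p as in the structure theorem. Then for any x ∈ M \ K, one has x^p ∈ F and D = F[M] = ⊕_{i=1}^{p} K·x^i. -/
/-!
An element of `M` lies in `K` exactly when it is killed by `φ : M → ℤ/p`. Since `M / ker φ` is
cyclic and `M` is non-abelian, `ker φ ⊆ K` is not central in `M`, so it contains some `u ∉ F`;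
as `[K:F] = p` is prime, `K = F[u]`. For `x ∈ M \ K` the conjugates `xⁱ u x⁻ⁱ` (`1 ≤ i ≤ p`)
lie in `ker φ ⊆ K`, and they are pairwise distinct: otherwise some `xᵏ` with `0 < k < p`
centralises `F[u] = K`, hence lies in the maximal subfield `K`, whereas `φ(x)ᵏ ≠ 1`. So
`x, …, xᵖ` are eigenvectors of `d ↦ d u` on the left `K`-space `D` with distinct eigenvalues,
hence a basis, since `[D:K] = p`. Then `xᵖ ∈ K` commutes with `K` and with `x`, so it is
central, and taking `x ∈ M \ K` shows `D = K[x] ⊆ F[M]`.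
-/

/-- A subgroup `H` of a group is subnormal if there is a finite chain of subgroups
from `H` up to the whole group, each normal in the next. -/
def IsSubnormal {Γ : Type*} [Group Γ] (H : Subgroup Γ) : Prop :=
  ∃ (k : ℕ) (s : ℕ → Subgroup Γ), s 0 = H ∧ s k = ⊤ ∧
    ∀ i < k, s i ≤ s (i + 1) ∧ ((s i).subgroupOf (s (i + 1))).Normal

variable {D : Type*} [DivisionRing D]

/-- Inclusion of the center into a subfield containing it. -/
def centerInclusion (K : Subfield D) (h : ∀ x ∈ Subring.center D, x ∈ K) :
    (Subring.center D) →+* K where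
  toFun a := ⟨(a : D), h a a.2⟩
  map_one' := rfl
  map_mul' _ _ := rfl
  map_zero' := rfl
  map_add' _ _ := rfl

/-- The dimension of a subfield `K` over the center of `D`. -/
noncomputable def finrankOverCenter (K : Subfield D)
    (hFK : ∀ x ∈ Subring.center D, x ∈ K) : ℕ :=
  letI : Module (Subring.center D) K := Module.compHom K (centerInclusion K hFK)
  Module.finrank (Subring.center D) K

/-- The group of units of `D` lying in the subfield `K`. -/
def Subfield.unitsIn (K : Subfield D) : Subgroup Dˣ where
  carrier := {u | (u : D) ∈ K}
  mul_mem' ha hb := K.mul_mem ha hb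
  one_mem' := K.one_mem
  inv_mem' := fun {u} hu => by
    simpa [Units.val_inv_eq_inv_val] using K.inv_mem hu

open Module

theorem Subring.inv_mem_of_center_le [FiniteDimensional (Subring.center D) D] {R : Subring D}
    (hR : Subring.center D ≤ R) {a : D} (ha : a ∈ R) : a⁻¹ ∈ R :=
  IsIntegral.inv_mem (A := { R with algebraMap_mem' := fun c : Subring.center D => hR c.2 })
    (IsIntegral.of_finite _ a) ha

def Subring.toSubfieldOfCenterLE [FiniteDimensional (Subring.center D) D] (R : Subring D)
    (hR : Subring.center D ≤ R) : Subfield D :=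
  { R with inv_mem' := fun _ => inv_mem_of_center_le hR }

theorem Subfield.mem_of_forall_commute [FiniteDimensional (Subring.center D) D]
    {K : Subfield D} (hcomm : ∀ x y : K, x * y = y * x) (hFK : ∀ x ∈ Subring.center D, x ∈ K)
    (hKmax : ∀ K' : Subfield D, (∀ x y : K', x * y = y * x) → K ≤ K' → K' = K)
    {z : D} (hz : ∀ k ∈ K, Commute z k) : z ∈ K := by
  set R := Subring.closure ((K : Set D) ∪ {z})
  have hRcomm : IsMulCommutative R := Subring.isMulCommutative_closure <| by
    rintro a (ha | rfl) b (hb | rfl)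
    · exact congrArg Subtype.val (hcomm ⟨a, ha⟩ ⟨b, hb⟩)
    · exact (hz a ha).eq.symm
    · exact (hz b hb).eq
    · rfl
  have hKR : K ≤ R.toSubfieldOfCenterLE fun x hx => Subring.subset_closure (.inl (hFK x hx)) :=
    fun k hk => Subring.subset_closure (.inl hk)
  rw [← hKmax _ (fun x y => hRcomm.is_comm.comm x y) hKR]
  exact Subring.subset_closure (.inr rfl)

theorem finrankOverCenter_mul_finrank (K : Subfield D) (hFK : ∀ x ∈ Subring.center D, x ∈ K) :
    finrankOverCenter K hFK * finrank K D = finrank (Subring.center D) D := by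
  let _ : Module (Subring.center D) K := Module.compHom K (centerInclusion K hFK)
  have _ : IsScalarTower (Subring.center D) K D := ⟨fun a k d => mul_assoc (a : D) (k : D) d⟩
  exact Module.finrank_mul_finrank _ _ _

theorem RingHom.surjective_of_finrank_compHom_eq_one {A B : Type*} [DivisionRing A]
    [DivisionRing B] (f : A →+* B) (h : letI := Module.compHom B f; Module.finrank A B = 1) :
    Function.Surjective f := by
  let _ := Module.compHom B f
  intro b
  obtain ⟨c, hc⟩ := (finrank_eq_one_iff_of_nonzero' (1 : B) one_ne_zero).1 h b
  exact ⟨c, (mul_one (f c)).symm.trans hc⟩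

theorem Subfield.eq_of_le_of_finrankOverCenter_prime {E K : Subfield D}
    (hFE : ∀ x ∈ Subring.center D, x ∈ E) (hEK : E ≤ K)
    (hp : (finrankOverCenter K fun x hx => hEK (hFE x hx)).Prime)
    {u : D} (huE : u ∈ E) (hu : u ∉ Subring.center D) : E = K := by
  let _ : Module (Subring.center D) E := Module.compHom E (centerInclusion E hFE)
  let _ : Module (Subring.center D) K :=
    Module.compHom K (centerInclusion K fun x hx => hEK (hFE x hx))
  let _ : Module E K := Module.compHom K (Subfield.inclusion hEK)
  have _ : IsScalarTower (Subring.center D) E K :=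
    ⟨fun a e k => Subtype.ext (mul_assoc (a : D) (e : D) (k : D))⟩
  have htower : finrank (Subring.center D) E * finrank E K = finrankOverCenter K _ :=
    Module.finrank_mul_finrank _ _ _
  rcases hp.eq_one_or_self_of_dvd _ ⟨_, htower.symm⟩ with hFE1 | hEp
  · obtain ⟨c, hc⟩ := (centerInclusion E hFE).surjective_of_finrank_compHom_eq_one hFE1 ⟨u, huE⟩
    have hcu : (c : D) = u := congrArg Subtype.val hc
    exact absurd (hcu ▸ c.2) hu
  · have hEK1 : finrank E K = 1 := by
      rw [hEp] at htower
      exact (Nat.mul_eq_left hp.ne_zero).1 htower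
    refine le_antisymm hEK fun k hk => ?_
    obtain ⟨e, he⟩ := (Subfield.inclusion hEK).surjective_of_finrank_compHom_eq_one hEK1 ⟨k, hk⟩
    have hek : (e : D) = k := congrArg Subtype.val he
    exact hek ▸ e.2

theorem Subfield.toSubring_eq_closure_of_finrankOverCenter_prime
    [FiniteDimensional (Subring.center D) D] {K : Subfield D}
    (hFK : ∀ x ∈ Subring.center D, x ∈ K) (hp : (finrankOverCenter K hFK).Prime)
    {u : D} (huK : u ∈ K) (hu : u ∉ Subring.center D) :
    K.toSubring = Subring.closure ((Subring.center D : Set D) ∪ {u}) := by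
  have hFE : Subring.center D ≤ Subring.closure ((Subring.center D : Set D) ∪ {u}) :=
    fun x hx => Subring.subset_closure (.inl hx)
  have hEK : Subring.closure ((Subring.center D : Set D) ∪ {u}) ≤ K.toSubring :=
    Subring.closure_le.2 <| Set.union_subset (fun x hx => hFK x hx) (by simpa using huK)
  have hEK' := Subfield.eq_of_le_of_finrankOverCenter_prime
    (E := Subring.toSubfieldOfCenterLE _ hFE) hFE hEK hp (Subring.subset_closure (.inr rfl)) hu
  exact congrArg Subfield.toSubring hEK'.symm

theorem Subfield.commute_of_commute_of_toSubring_eq_closure {K : Subfield D} {u y : D}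
    (hKu : K.toSubring = Subring.closure ((Subring.center D : Set D) ∪ {u}))
    (hyu : Commute y u) {k : D} (hk : k ∈ K) : Commute y k := by
  have hle : K.toSubring ≤ Subring.centralizer {y} := hKu ▸ Subring.closure_le.2
    (Set.union_subset
      (fun c hc => Subring.mem_centralizer_iff.2 fun _ hg => hg ▸ Subring.mem_center_iff.1 hc y)
      (Set.singleton_subset_iff.2 (Subring.mem_centralizer_iff.2 fun _ hg => hg ▸ hyu.eq)))
  exact Subring.mem_centralizer_iff.1 (hle hk) y rfl

theorem Subfield.linearIndependent_of_mul_eq_mul (K : Subfield D)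
    (hcomm : ∀ x y : K, x * y = y * x) {ι : Type*} {v : ι → D} (hv0 : ∀ i, v i ≠ 0) (u : D)
    (μ : ι → K) (hμ : Function.Injective μ) (hv : ∀ i, v i * u = μ i * v i) :
    LinearIndependent K v := by
  let _ : CommRing K := { (inferInstance : Ring K) with mul_comm := hcomm }
  exact Module.End.eigenvectors_linearIndependent' (LinearMap.mulRight K u) μ hμ v fun i =>
    Module.End.hasEigenvector_iff.2 ⟨Module.End.mem_eigenspace_iff.2 (hv i), hv0 i⟩

section SpanOverSubfield

variable {K : Subfield D} {ι : Type*} [Fintype ι] {v : ι → D}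

theorem Subfield.exists_eq_sum_mul_of_span_eq_top (hv : Submodule.span K (Set.range v) = ⊤)
    (d : D) : ∃ c : ι → D, (∀ i, c i ∈ K) ∧ d = ∑ i, c i * v i := by
  obtain ⟨c, hc⟩ :=
    (Submodule.mem_span_range_iff_exists_fun K).1 (hv ▸ Submodule.mem_top (x := d))
  exact ⟨fun i => c i, fun i => (c i).2, hc.symm⟩

theorem Subfield.eq_zero_of_sum_mul_eq_zero (hv : LinearIndependent K v) {c : ι → D}
    (hc : ∀ i, c i ∈ K) (hsum : ∑ i, c i * v i = 0) (i : ι) : c i = 0 :=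
  congrArg Subtype.val (Fintype.linearIndependent_iff.1 hv (fun i => ⟨c i, hc i⟩) hsum i)

theorem Subring.eq_top_of_span_eq_top (hv : Submodule.span K (Set.range v) = ⊤) {S : Subring D}
    (hKS : K.toSubring ≤ S) (hvS : ∀ i, v i ∈ S) : S = ⊤ := by
  refine eq_top_iff.2 fun d _ => ?_
  obtain ⟨c, hc, rfl⟩ := K.exists_eq_sum_mul_of_span_eq_top hv d
  exact S.sum_mem fun i _ => S.mul_mem (hKS (hc i)) (hvS i)

theorem Subfield.mem_center_of_span_eq_top (hv : Submodule.span K (Set.range v) = ⊤) {y : D}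
    (hyK : ∀ k ∈ K, Commute y k) (hyv : ∀ i, Commute y (v i)) : y ∈ Subring.center D := by
  have htop : Subring.centralizer {y} = ⊤ := Subring.eq_top_of_span_eq_top hv
    (fun k hk => Subring.mem_centralizer_iff.2 fun _ hg => hg ▸ (hyK k hk).eq)
    (fun i => Subring.mem_centralizer_iff.2 fun _ hg => hg ▸ (hyv i).eq)
  refine Subring.mem_center_iff.2 fun d => ?_
  have hd : d ∈ Subring.centralizer {y} := by rw [htop]; exact Subring.mem_top d
  exact (Subring.mem_centralizer_iff.1 hd y rfl).symm

end SpanOverSubfield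

theorem injective_conj_pow_succ {G : Type*} [Group G] {x u : G} {n : ℕ}
    (h : ∀ k, 0 < k → k < n → ¬ Commute (x ^ k) u) :
    Function.Injective fun i : Fin n => MulAut.conj (x ^ ((i : ℕ) + 1)) u := by
  have key : ∀ a b : ℕ, a < b → b < a + n → MulAut.conj (x ^ a) u ≠ MulAut.conj (x ^ b) u := by
    intro a b hab hbn hconj
    rw [← Nat.add_sub_cancel' hab.le, pow_add, map_mul, MulAut.mul_apply] at hconj
    refine h (b - a) (by omega) (by omega) ?_
    have hfix := (MulAut.conj (x ^ a)).injective hconj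
    rw [MulAut.conj_apply, eq_mul_inv_iff_mul_eq] at hfix
    exact hfix.symm
  intro i j hij
  rcases lt_trichotomy (i : ℕ) j with hlt | heq | hgt
  · exact absurd hij (key _ _ (by omega) (by omega))
  · exact Fin.ext heq
  · exact absurd hij.symm (key _ _ (by omega) (by omega))

section QuotientMap

variable {M : Subgroup Dˣ} {K : Subfield D} {p : ℕ} {φ : M →* Multiplicative (ZMod p)}

theorem val_mem_iff_of_ker_eq (hφ : φ.ker = K.unitsIn.subgroupOf M) (w : M) :
    ((w : Dˣ) : D) ∈ K ↔ φ w = 1 := by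
  rw [← MonoidHom.mem_ker, hφ]
  rfl

theorem exists_mem_not_mem_center (hφ : φ.ker = K.unitsIn.subgroupOf M)
    (hnonab : ¬ ∀ x ∈ M, ∀ y ∈ M, x * y = y * x) :
    ∃ u ∈ M, (u : D) ∈ K ∧ (u : D) ∉ Subring.center D := by
  by_contra! hcen
  have hker : φ.ker ≤ Subgroup.center M := fun w hw =>
    have hwF := hcen w w.2 ((val_mem_iff_of_ker_eq hφ w).2 hw)
    Subgroup.mem_center_iff.2 fun g =>
      Subtype.ext (Units.ext (Subring.mem_center_iff.1 hwF ((g : Dˣ) : D)))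
  have hMcomm := φ.isMulCommutative_of_isCyclic_of_ker_le_center hker
  exact hnonab fun x hx y hy => congrArg Subtype.val (hMcomm.is_comm.comm ⟨x, hx⟩ ⟨y, hy⟩)

theorem val_conj_mem (hφ : φ.ker = K.unitsIn.subgroupOf M) {w u : Dˣ}
    (hw : w ∈ M) (hu : u ∈ M) (huK : (u : D) ∈ K) : ((MulAut.conj w u : Dˣ) : D) ∈ K := by
  have hmem : MulAut.conj w u ∈ M := M.mul_mem (M.mul_mem hw hu) (M.inv_mem hw)
  have hconj : (⟨MulAut.conj w u, hmem⟩ : M) = ⟨w, hw⟩ * ⟨u, hu⟩ * ⟨w, hw⟩⁻¹ := rfl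
  rw [val_mem_iff_of_ker_eq hφ ⟨_, hmem⟩, hconj, map_mul, map_mul,
    (val_mem_iff_of_ker_eq hφ ⟨u, hu⟩).1 huK, mul_one, map_inv, mul_inv_cancel]

theorem val_pow_mem_iff_dvd [Fact p.Prime] (hφ : φ.ker = K.unitsIn.subgroupOf M)
    {x : Dˣ} (hx : x ∈ M) (hxK : (x : D) ∉ K) (n : ℕ) : (x : D) ^ n ∈ K ↔ p ∣ n := by
  have hpow : (⟨x ^ n, pow_mem hx n⟩ : M) = ⟨x, hx⟩ ^ n := rfl
  have hxp : φ ⟨x, hx⟩ ^ p = 1 := by simpa using pow_card_eq_one (x := φ ⟨x, hx⟩)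
  rw [← Units.val_pow_eq_pow_val, val_mem_iff_of_ker_eq hφ ⟨_, pow_mem hx n⟩, hpow, map_pow,
    ← orderOf_dvd_iff_pow_eq_one,
    orderOf_eq_prime hxp ((val_mem_iff_of_ker_eq hφ ⟨x, hx⟩).not.1 hxK)]

end QuotientMap

theorem linearIndependent_pow_succ_and_span_eq_top [FiniteDimensional (Subring.center D) D]
    {M : Subgroup Dˣ} {K : Subfield D} {p : ℕ} [Fact p.Prime]
    {φ : M →* Multiplicative (ZMod p)} (hcomm : ∀ x y : K, x * y = y * x)
    (hFK : ∀ x ∈ Subring.center D, x ∈ K)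
    (hKmax : ∀ K' : Subfield D, (∀ x y : K', x * y = y * x) → K ≤ K' → K' = K)
    (hKD : finrank K D = p) (hφ : φ.ker = K.unitsIn.subgroupOf M) {u : Dˣ} (huM : u ∈ M)
    (hKu : K.toSubring = Subring.closure ((Subring.center D : Set D) ∪ {(u : D)}))
    {x : Dˣ} (hxM : x ∈ M) (hxK : (x : D) ∉ K) :
    LinearIndependent K (fun i : Fin p => (x : D) ^ ((i : ℕ) + 1)) ∧
      Submodule.span K (Set.range fun i : Fin p => (x : D) ^ ((i : ℕ) + 1)) = ⊤ := by
  have huK : (u : D) ∈ K := by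
    change (u : D) ∈ K.toSubring
    exact hKu ▸ Subring.subset_closure (.inr rfl)
  have hnc : ∀ k, 0 < k → k < p → ¬ Commute (x ^ k) u := fun k hk0 hkp hxu =>
    have hxu' : Commute ((x : D) ^ k) u := by simpa using hxu.units_val
    Nat.not_dvd_of_pos_of_lt hk0 hkp <| (val_pow_mem_iff_dvd hφ hxM hxK k).1 <|
      Subfield.mem_of_forall_commute hcomm hFK hKmax fun _ hy =>
        Subfield.commute_of_commute_of_toSubring_eq_closure hKu hxu' hy
  have hli : LinearIndependent K (fun i : Fin p => (x : D) ^ ((i : ℕ) + 1)) :=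
    K.linearIndependent_of_mul_eq_mul hcomm (fun _ => pow_ne_zero _ x.ne_zero) u
      (fun i => ⟨_, val_conj_mem hφ (pow_mem hxM ((i : ℕ) + 1)) huM huK⟩)
      (fun _ _ h => injective_conj_pow_succ hnc (Units.ext (congrArg Subtype.val h)))
      (fun i => by
        simp only [← Units.val_pow_eq_pow_val, ← Units.val_mul, MulAut.conj_apply,
          inv_mul_cancel_right])
  have : Nonempty (Fin p) := ⟨⟨0, (Fact.out : p.Prime).pos⟩⟩
  exact ⟨hli, hli.span_eq_top_of_card_eq_finrank (by rw [Fintype.card_fin, hKD])⟩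

theorem power_central_and_decomposition_general (G M : Subgroup Dˣ)
    (hmax : M < G ∧ ∀ H : Subgroup Dˣ, M ≤ H → H ≤ G → H = M ∨ H = G)
    (hnonab : ¬ ∀ x ∈ M, ∀ y ∈ M, x * y = y * x)
    (K : Subfield D) (hcomm : ∀ x y : K, x * y = y * x)
    (hFK : ∀ x ∈ Subring.center D, x ∈ K)
    (hKmax : ∀ K' : Subfield D, (∀ x y : K', x * y = y * x) → K ≤ K' → K' = K)
    (p : ℕ) (hp : p.Prime)
    (hKF : finrankOverCenter K hFK = p)
    (hDF : Module.finrank (Subring.center D) D = p ^ 2)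
    (hquot : ∃ φ : ↥M →* Multiplicative (ZMod p), Function.Surjective φ ∧
      φ.ker = (K.unitsIn ⊓ G).subgroupOf M) :
    -- D = F[M]
    Subring.closure ((Subring.center D : Set D) ∪ (Units.val '' (M : Set Dˣ))) = ⊤ ∧
    ∀ x : Dˣ, x ∈ M → (x : D) ∉ K →
      -- x^p is central
      ((x : D) ^ p ∈ Subring.center D ∧
      -- D = ⊕_{i=1}^{p} K·xⁱ : the powers x, x², …, x^p span D over K …
      (∀ d : D, ∃ c : Fin p → D, (∀ i, c i ∈ K) ∧
        d = ∑ i : Fin p, c i * (x : D) ^ ((i : ℕ) + 1)) ∧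
      -- … and are left linearly independent over K
      (∀ c : Fin p → D, (∀ i, c i ∈ K) →
        (∑ i : Fin p, c i * (x : D) ^ ((i : ℕ) + 1)) = 0 → ∀ i, c i = 0)) := by
  have : Fact p.Prime := ⟨hp⟩
  have : FiniteDimensional (Subring.center D) D :=
    .of_finrank_pos (by rw [hDF]; exact pow_pos hp.pos 2)
  obtain ⟨φ, hφsurj, hφker⟩ := hquot
  have hφ : φ.ker = K.unitsIn.subgroupOf M := by
    ext w
    rw [hφker, Subgroup.mem_subgroupOf, Subgroup.mem_subgroupOf, Subgroup.mem_inf,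
      and_iff_left (hmax.1.le w.2)]
  have hKD : finrank K D = p := by
    have htower := finrankOverCenter_mul_finrank K hFK
    rw [hKF, hDF, sq] at htower
    exact Nat.eq_of_mul_eq_mul_left hp.pos htower
  obtain ⟨u, huM, huK, hu⟩ := exists_mem_not_mem_center hφ hnonab
  have hKu := K.toSubring_eq_closure_of_finrankOverCenter_prime hFK (hKF ▸ hp) huK hu
  have hbasis {x : Dˣ} (hxM : x ∈ M) (hxK : (x : D) ∉ K) :=
    linearIndependent_pow_succ_and_span_eq_top hcomm hFK hKmax hKD hφ huM hKu hxM hxK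
  obtain ⟨m, hm⟩ := hφsurj (Multiplicative.ofAdd 1)
  have hmK : ((m : Dˣ) : D) ∉ K := by simp [val_mem_iff_of_ker_eq hφ m, hm]
  refine ⟨Subring.eq_top_of_span_eq_top (hbasis m.2 hmK).2 ?_ fun i => ?_,
    fun x hxM hxK => ⟨?_, K.exists_eq_sum_mul_of_span_eq_top (hbasis hxM hxK).2,
      fun c hc hsum => K.eq_zero_of_sum_mul_eq_zero (hbasis hxM hxK).1 hc hsum⟩⟩
  · exact hKu ▸ Subring.closure_mono
      (Set.union_subset_union_right _ (Set.singleton_subset_iff.2 ⟨u, huM, rfl⟩))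
  · exact Subring.pow_mem _ (Subring.subset_closure (.inr ⟨m, m.2, rfl⟩)) _
  · have hxpK : (x : D) ^ p ∈ K := (val_pow_mem_iff_dvd hφ hxM hxK p).2 dvd_rfl
    exact K.mem_center_of_span_eq_top (hbasis hxM hxK).2
      (fun k hk => congrArg Subtype.val (hcomm ⟨_, hxpK⟩ ⟨k, hk⟩))
      (fun _ => Commute.pow_pow_self _ _ _)

/-- Let `D` be a division ring with center `F`, `G` subnormal in `Dˣ`, `M` a non-abelian
solvable maximal subgroup of `G`, and `K` a maximal subfield of `D` with
`M/(K* ∩ G) ≅ ℤ/pℤ` for a prime `p` as in the structure theorem.  Then for every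
`x ∈ M \ K` one has `x^p ∈ F` and `D = F[M] = ⊕_{i=1}^{p} K·xⁱ`. -/
theorem power_central_and_decomposition (G M : Subgroup Dˣ) (hG : IsSubnormal G)
    (hmax : M < G ∧ ∀ H : Subgroup Dˣ, M ≤ H → H ≤ G → H = M ∨ H = G)
    (hsol : IsSolvable ↥M)
    (hnonab : ¬ ∀ x ∈ M, ∀ y ∈ M, x * y = y * x)
    (K : Subfield D) (hcomm : ∀ x y : K, x * y = y * x)
    (hFK : ∀ x ∈ Subring.center D, x ∈ K)
    (hKmax : ∀ K' : Subfield D, (∀ x y : K', x * y = y * x) → K ≤ K' → K' = K)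
    (p : ℕ) (hp : p.Prime)
    (hKF : finrankOverCenter K hFK = p)
    (hDF : Module.finrank (Subring.center D) D = p ^ 2)
    (hquot : ∃ φ : ↥M →* Multiplicative (ZMod p), Function.Surjective φ ∧
      φ.ker = (K.unitsIn ⊓ G).subgroupOf M) :
    -- D = F[M]
    Subring.closure ((Subring.center D : Set D) ∪ (Units.val '' (M : Set Dˣ))) = ⊤ ∧
    ∀ x : Dˣ, x ∈ M → (x : D) ∉ K →
      -- x^p is central
      ((x : D) ^ p ∈ Subring.center D ∧
      -- D = ⊕_{i=1}^{p} K·xⁱ : the powers x, x², …, x^p span D over K …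
      (∀ d : D, ∃ c : Fin p → D, (∀ i, c i ∈ K) ∧
        d = ∑ i : Fin p, c i * (x : D) ^ ((i : ℕ) + 1)) ∧
      -- … and are left linearly independent over K
      (∀ c : Fin p → D, (∀ i, c i ∈ K) →
        (∑ i : Fin p, c i * (x : D) ^ ((i : ℕ) + 1)) = 0 → ∀ i, c i = 0)) :=
  power_central_and_decomposition_general G M hmax hnonab K hcomm hFK hKmax p hp hKF hDF hquot
end

section
/- The subgroup C* ∪ C*·j of the multiplicative group H* of the real quaternions H is a solvable (indeed metabelian) maximal subgroup of H*. -/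
/-!
Write `q = z + w j` with `z w ∈ ℂ`. Multiplication respects the `ℤ/2`-grading into the parts
`w = 0` and `z = 0`, so every commutator in `M = ℂ* ∪ ℂ* j` lies in the commutative group `ℂ*`,
and `M` is metabelian.

Left and right multiplication by `ℂ*` reach every `z' + w' j` with `|z'| : |w'| = |z| : |w|`
(take a square root of a unit complex number), so outside `M` the double cosets `ℂ* q ℂ*` are
classified by the `j`-weight `x = |w|² / |q|² ∈ (0, 1)`. Conjugating a unit `α ∈ ℂ` by `q` gives
`j`-weight `4 (Im α)² x (1 - x)`, so the weights occurring in a subgroup `H ⊋ M` are closed under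
`x ↦ [0, 4 x (1 - x)]`. As `4 (y/2) (1 - y/2) ≥ y` on `[0, 1]`, the weights reached from one
`x ∈ (0, 1)` double until they fill `[0, 1]`, whence `H = ℍ*`.
-/

/-- The quaternion `j` in the real quaternions. -/
def quaternionJ : Quaternion ℝ := ⟨0, 0, 1, 0⟩

open scoped commutatorElement

lemma Icc_subset_of_four_mul_mul_one_sub_mem {X : Set ℝ} {x₀ : ℝ} (hx₀ : x₀ ∈ X) (h0 : 0 < x₀)
    (h1 : x₀ < 1) (hX : ∀ x ∈ X, ∀ t ∈ Set.Icc (0 : ℝ) 1, 4 * t * x * (1 - x) ∈ X) :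
    Set.Icc 0 1 ⊆ X := by
  have hdouble : ∀ y ∈ Set.Icc (0 : ℝ) 1, y / 2 ∈ X → y ∈ X := by
    rintro y ⟨hy0, hy1⟩ hy
    have ht : 1 / (2 - y) ∈ Set.Icc (0 : ℝ) 1 :=
      ⟨by bound, by rw [div_le_one (by linarith)]; linarith⟩
    convert hX _ hy _ ht using 1
    field_simp [show 2 - y ≠ 0 by linarith]
    ring
  set q := 4 * x₀ * (1 - x₀)
  have hq : 0 < q := by positivity
  have hsmall : ∀ n : ℕ, ∀ y ∈ Set.Icc (0 : ℝ) 1, y ≤ 2 ^ n * q → y ∈ X := by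
    intro n
    induction n with
    | zero =>
      rintro y ⟨hy0, -⟩ hy
      have ht : y / q ∈ Set.Icc (0 : ℝ) 1 := ⟨by positivity, by rw [div_le_one hq]; simpa using hy⟩
      convert hX _ hx₀ _ ht using 1
      field_simp
      simp only [q]
      ring
    | succ n ih =>
      rintro y ⟨hy0, hy1⟩ hy
      refine hdouble y ⟨hy0, hy1⟩ (ih _ ⟨by positivity, by linarith⟩ ?_)
      rw [pow_succ] at hy
      linarith
  obtain ⟨n, hn⟩ := pow_unbounded_of_one_lt q⁻¹ one_lt_two
  rintro y hy
  refine hsmall n y hy (hy.2.trans ?_)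
  rw [inv_lt_iff_one_lt_mul₀ hq] at hn
  linarith

namespace Quaternion

open ComplexConjugate

-- `q = complexPart q + jPart q * j`, both parts in `ℂ = ℝ + ℝ i`.
def complexPart (q : ℍ[ℝ]) : ℂ := ⟨q.re, q.imI⟩

def jPart (q : ℍ[ℝ]) : ℂ := ⟨q.imJ, q.imK⟩

@[simp] lemma complexPart_coeComplex (z : ℂ) : complexPart z = z := rfl

@[simp] lemma jPart_coeComplex (z : ℂ) : jPart z = 0 := rfl

@[simp] lemma complexPart_quaternionJ : complexPart quaternionJ = 0 := rfl

@[simp] lemma jPart_quaternionJ : jPart quaternionJ = 1 := rfl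

lemma ext_complexPart {p q : ℍ[ℝ]} (hz : complexPart p = complexPart q) (hw : jPart p = jPart q) :
    p = q := by
  simp only [complexPart, jPart, Complex.ext_iff] at hz hw
  ext <;> tauto

lemma jPart_eq_zero_iff {q : ℍ[ℝ]} : jPart q = 0 ↔ q.imJ = 0 ∧ q.imK = 0 := by
  simp [jPart, Complex.ext_iff]

@[simp] lemma complexPart_mul (p q : ℍ[ℝ]) :
    complexPart (p * q) = complexPart p * complexPart q - jPart p * conj (jPart q) := by
  apply Complex.ext <;>
    simp only [complexPart, jPart, re_mul, imI_mul, Complex.sub_re, Complex.sub_im, Complex.mul_re,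
      Complex.mul_im, Complex.conj_re, Complex.conj_im] <;> ring

@[simp] lemma jPart_mul (p q : ℍ[ℝ]) :
    jPart (p * q) = complexPart p * jPart q + jPart p * conj (complexPart q) := by
  apply Complex.ext <;>
    simp only [complexPart, jPart, imJ_mul, imK_mul, Complex.add_re, Complex.add_im, Complex.mul_re,
      Complex.mul_im, Complex.conj_re, Complex.conj_im] <;> ring

lemma normSq_eq_normSq_complexPart_add (q : ℍ[ℝ]) :
    normSq q = Complex.normSq (complexPart q) + Complex.normSq (jPart q) := by
  simp only [normSq_def', complexPart, jPart, Complex.normSq_apply]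
  ring

@[simp] lemma complexPart_inv (q : ℍ[ℝ]) :
    complexPart q⁻¹ = (normSq q)⁻¹ • conj (complexPart q) := by
  apply Complex.ext <;> simp [complexPart, inv_def]

@[simp] lemma jPart_inv (q : ℍ[ℝ]) : jPart q⁻¹ = -((normSq q)⁻¹ • jPart q) := by
  apply Complex.ext <;> simp [jPart, inv_def]

lemma commute_of_jPart_eq_zero {p q : ℍ[ℝ]} (hp : jPart p = 0) (hq : jPart q = 0) :
    Commute p q :=
  ext_complexPart (by simp [hp, hq, mul_comm]) (by simp [hp, hq])

def complexSubgroup : Subgroup ℍ[ℝ]ˣ where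
  carrier := {u | jPart u = 0}
  one_mem' := rfl
  mul_mem' {a b} ha hb := by simp_all
  inv_mem' {a} ha := by simp_all [Units.val_inv_eq_inv_val]

def complexJSubgroup : Subgroup ℍ[ℝ]ˣ where
  carrier := {u | jPart u = 0 ∨ complexPart u = 0}
  one_mem' := Or.inl rfl
  mul_mem' {a b} ha hb := by
    rcases ha with ha | ha <;> rcases hb with hb | hb <;> simp [ha, hb]
  inv_mem' {a} ha := by
    rcases ha with ha | ha <;> simp [ha, Units.val_inv_eq_inv_val]

lemma mem_complexJSubgroup {u : ℍ[ℝ]ˣ} :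
    u ∈ complexJSubgroup ↔ jPart u = 0 ∨ complexPart u = 0 := Iff.rfl

lemma commutator_mem_complexSubgroup {a b : ℍ[ℝ]ˣ} (ha : a ∈ complexJSubgroup)
    (hb : b ∈ complexJSubgroup) : ⁅a, b⁆ ∈ complexSubgroup := by
  change jPart _ = 0
  rcases ha with ha | ha <;> rcases hb with hb | hb <;>
    simp [commutatorElement_def, Units.val_inv_eq_inv_val, ha, hb]

lemma derivedSeries_complexJSubgroup_two : derivedSeries complexJSubgroup 2 = ⊥ := by
  have hcomm : commutator complexJSubgroup ≤ complexSubgroup.subgroupOf complexJSubgroup :=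
    Subgroup.commutator_le.2 fun a _ b _ => commutator_mem_complexSubgroup a.2 b.2
  rw [eq_bot_iff, derivedSeries_succ, derivedSeries_one]
  refine (Subgroup.commutator_mono hcomm hcomm).trans (Subgroup.commutator_le.2 fun a ha b hb => ?_)
  rw [Subgroup.mem_bot, commutatorElement_eq_one_iff_commute]
  exact Subtype.ext <| Units.ext <| commute_of_jPart_eq_zero ha hb

lemma isSolvable_complexJSubgroup : Group.IsSolvable complexJSubgroup :=
  ⟨⟨2, derivedSeries_complexJSubgroup_two⟩⟩

lemma commutatorElement_commutatorElement_eq_one (a b c d : complexJSubgroup) :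
    ⁅⁅a, b⁆, ⁅c, d⁆⁆ = 1 := by
  rw [← Subgroup.mem_bot, ← derivedSeries_complexJSubgroup_two]
  exact Subgroup.commutator_mem_commutator
    (Subgroup.commutator_mem_commutator trivial trivial)
    (Subgroup.commutator_mem_commutator trivial trivial)

lemma complexPart_eq_zero_iff {q : ℍ[ℝ]} :
    complexPart q = 0 ↔ ∃ c : ℍ[ℝ], jPart c = 0 ∧ q = c * quaternionJ := by
  refine ⟨fun h => ⟨jPart q, rfl, ext_complexPart (by simp [h]) (by simp)⟩, ?_⟩
  rintro ⟨c, hc, rfl⟩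
  simp [hc]

lemma coe_complexJSubgroup : (complexJSubgroup : Set ℍ[ℝ]ˣ) = {u : ℍ[ℝ]ˣ |
    ((u : ℍ[ℝ]).imJ = 0 ∧ (u : ℍ[ℝ]).imK = 0) ∨
    ∃ c : ℍ[ℝ], (c.imJ = 0 ∧ c.imK = 0) ∧ (u : ℍ[ℝ]) = c * quaternionJ} := by
  ext u
  simp only [SetLike.mem_coe, mem_complexJSubgroup, complexPart_eq_zero_iff, jPart_eq_zero_iff,
    Set.mem_ofPred_eq]

lemma complexJSubgroup_ne_top : complexJSubgroup ≠ ⊤ := by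
  let q : ℍ[ℝ] := ⟨1, 0, 1, 0⟩
  have hz : complexPart q = 1 := rfl
  have hw : jPart q = 1 := rfl
  have hq : q ≠ 0 := fun h => one_ne_zero (hz ▸ h ▸ rfl : (1 : ℂ) = 0)
  intro htop
  have := htop ▸ Subgroup.mem_top (Units.mk0 q hq)
  simp [mem_complexJSubgroup, hz, hw] at this

lemma normSq_pos {R : Type*} [CommRing R] [LinearOrder R] [IsStrictOrderedRing R] {a : ℍ[R]}
    (ha : a ≠ 0) : 0 < normSq a :=
  normSq_nonneg.lt_of_ne' (normSq_ne_zero.2 ha)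

noncomputable def jWeight (q : ℍ[ℝ]) : ℝ := Complex.normSq (jPart q) / normSq q

lemma one_sub_jWeight {q : ℍ[ℝ]} (hq : q ≠ 0) :
    1 - jWeight q = Complex.normSq (complexPart q) / normSq q := by
  rw [jWeight, eq_div_iff (normSq_ne_zero.2 hq), sub_mul, div_mul_cancel₀ _ (normSq_ne_zero.2 hq),
    normSq_eq_normSq_complexPart_add]
  ring

lemma jWeight_pos_iff {q : ℍ[ℝ]} : 0 < jWeight q ↔ jPart q ≠ 0 := by
  refine ⟨fun h hw => by simp [jWeight, hw] at h, fun hw => div_pos (Complex.normSq_pos.2 hw) ?_⟩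
  exact normSq_pos fun hq => hw (by rw [hq]; rfl)

lemma jWeight_lt_one_iff {q : ℍ[ℝ]} (hq : q ≠ 0) : jWeight q < 1 ↔ complexPart q ≠ 0 := by
  rw [← sub_pos, one_sub_jWeight hq, div_pos_iff_of_pos_right (normSq_pos hq),
    Complex.normSq_pos]

lemma jWeight_mem_Ioo_of_notMem {u : ℍ[ℝ]ˣ} (hu : u ∉ complexJSubgroup) :
    jWeight u ∈ Set.Ioo 0 1 := by
  rw [mem_complexJSubgroup, not_or] at hu
  exact ⟨jWeight_pos_iff.2 hu.1, (jWeight_lt_one_iff u.ne_zero).2 hu.2⟩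

lemma jWeight_mul_coeComplex_mul_inv {q : ℍ[ℝ]} (hq : q ≠ 0) (α : ℂ) :
    jWeight (q * α * q⁻¹) = 4 * (α.im ^ 2 / Complex.normSq α) * jWeight q * (1 - jWeight q) := by
  have hj : jPart (q * α * q⁻¹) =
      ((normSq q)⁻¹ : ℝ) * complexPart q * jPart q * (conj α - α) := by
    simp only [jPart_mul, complexPart_mul, jPart_inv, complexPart_inv, complexPart_coeComplex,
      jPart_coeComplex, Complex.real_smul, map_mul, map_zero, Complex.conj_ofReal,
      Complex.conj_conj]
    ring
  have hn : normSq (q * (α : ℍ[ℝ]) * q⁻¹) = Complex.normSq α := by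
    rw [map_mul, map_mul, normSq_inv, normSq_eq_normSq_complexPart_add (α : ℍ[ℝ])]
    field_simp [normSq_ne_zero.2 hq]
    simp
  rw [jWeight, hj, hn, one_sub_jWeight hq, jWeight]
  have hc : Complex.normSq (conj α - α) = 4 * α.im ^ 2 := by
    simp only [Complex.normSq_apply, Complex.sub_re, Complex.sub_im, Complex.conj_re,
      Complex.conj_im]
    ring
  simp only [Complex.normSq_mul, Complex.normSq_ofReal, hc]
  field_simp

lemma exists_eq_coeComplex_mul_mul {p q : ℍ[ℝ]} (hp : p ≠ 0) (hq : q ≠ 0)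
    (h : jWeight p = jWeight q) (h0 : 0 < jWeight p) (h1 : jWeight p < 1) :
    ∃ α β : ℂ, α ≠ 0 ∧ β ≠ 0 ∧ q = α * p * β := by
  have hzp := (jWeight_lt_one_iff hp).1 h1
  have hwp := jWeight_pos_iff.1 h0
  have hzq := (jWeight_lt_one_iff hq).1 (h ▸ h1)
  have hwq := jWeight_pos_iff.1 (h ▸ h0)
  set γ := complexPart q / complexPart p
  set δ := jPart q / jPart p
  have hγ : γ ≠ 0 := div_ne_zero hzq hzp
  have hδ : δ ≠ 0 := div_ne_zero hwq hwp
  have hγδ : Complex.normSq γ = Complex.normSq δ := by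
    have hz := congrArg (1 - ·) h
    simp only [one_sub_jWeight hp, one_sub_jWeight hq] at hz
    rw [jWeight, jWeight] at h
    rw [div_eq_div_iff (normSq_ne_zero.2 hp) (normSq_ne_zero.2 hq)] at h hz
    simp only [γ, δ, map_div₀]
    rw [div_eq_div_iff (by simpa using hzp) (by simpa using hwp)]
    refine mul_right_cancel₀ (normSq_ne_zero.2 hp) ?_
    linear_combination Complex.normSq (complexPart p) * h - Complex.normSq (jPart p) * hz
  -- `α β = γ` and `α conj β = δ` are solved by a unit square root `β` of `γ / δ`.
  obtain ⟨β, hβ⟩ := IsAlgClosed.exists_pow_nat_eq (γ / δ) two_pos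
  have hβ0 : β ≠ 0 := by rintro rfl; simp at hβ; exact div_ne_zero hγ hδ hβ.symm
  have hβ1 : Complex.normSq β = 1 := by
    have := congrArg Complex.normSq hβ
    rw [map_pow, map_div₀, hγδ, div_self (by simpa using hδ)] at this
    exact (pow_eq_one_iff_of_nonneg (Complex.normSq_nonneg β) two_ne_zero).1 this
  have hconj : conj β = β⁻¹ := by simp [Complex.inv_def, hβ1]
  refine ⟨γ / β, β, div_ne_zero hγ hβ0, hβ0, ext_complexPart ?_ ?_⟩
  · simp only [complexPart_mul, complexPart_coeComplex, jPart_coeComplex, map_zero, zero_mul,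
      sub_zero, mul_zero, γ]
    field_simp
  · simp only [jPart_mul, complexPart_coeComplex, jPart_coeComplex, hconj, mul_zero, zero_mul,
      add_zero, zero_add]
    rw [show γ / β * jPart p * β⁻¹ = γ / β ^ 2 * jPart p by ring, hβ, div_div_cancel₀ hγ,
      div_mul_cancel₀ _ hwp]

lemma coeComplex_ne_zero {α : ℂ} (hα : α ≠ 0) : (α : ℍ[ℝ]) ≠ 0 :=
  (map_ne_zero ofComplex).2 hα

lemma mk0_coeComplex_mem {H : Subgroup ℍ[ℝ]ˣ} (hMH : complexJSubgroup ≤ H) {α : ℂ} (hα : α ≠ 0) :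
    Units.mk0 (α : ℍ[ℝ]) (coeComplex_ne_zero hα) ∈ H :=
  hMH (Or.inl (jPart_coeComplex α))

lemma exists_mem_jWeight_eq {H : Subgroup ℍ[ℝ]ˣ} (hMH : complexJSubgroup ≤ H) {u : ℍ[ℝ]ˣ}
    (hu : u ∈ H) {t : ℝ} (ht : t ∈ Set.Icc (0 : ℝ) 1) :
    ∃ v ∈ H, jWeight v = 4 * t * jWeight u * (1 - jWeight u) := by
  let α : ℂ := ⟨√(1 - t), √t⟩
  have hα : Complex.normSq α = 1 := by
    simp [α, Complex.normSq_apply, ← sq, ht.1, ht.2]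
  have hα0 : α ≠ 0 := fun h => by simp [h] at hα
  refine ⟨u * Units.mk0 _ (coeComplex_ne_zero hα0) * u⁻¹,
    mul_mem (mul_mem hu (mk0_coeComplex_mem hMH hα0)) (inv_mem hu), ?_⟩
  rw [Units.val_mul, Units.val_mul, Units.val_inv_eq_inv_val, Units.val_mk0,
    jWeight_mul_coeComplex_mul_inv u.ne_zero, hα]
  simp [α, ht.1]

lemma mem_of_jWeight_eq {H : Subgroup ℍ[ℝ]ˣ} (hMH : complexJSubgroup ≤ H) {u v : ℍ[ℝ]ˣ}
    (hu : u ∈ H) (hv : v ∉ complexJSubgroup) (h : jWeight u = jWeight v) : v ∈ H := by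
  obtain ⟨h0, h1⟩ := jWeight_mem_Ioo_of_notMem hv
  rw [← h] at h0 h1
  obtain ⟨α, β, hα, hβ, huv⟩ := exists_eq_coeComplex_mul_mul u.ne_zero v.ne_zero h h0 h1
  have : v = Units.mk0 _ (coeComplex_ne_zero hα) * u * Units.mk0 _ (coeComplex_ne_zero hβ) :=
    Units.ext huv
  rw [this]
  exact mul_mem (mul_mem (mk0_coeComplex_mem hMH hα) hu) (mk0_coeComplex_mem hMH hβ)

lemma isCoatom_complexJSubgroup : IsCoatom complexJSubgroup := by
  refine ⟨complexJSubgroup_ne_top, fun H hlt => ?_⟩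
  obtain ⟨u, hu, huM⟩ := SetLike.exists_of_lt hlt
  have hX : Set.Icc 0 1 ⊆ {x | ∃ v ∈ H, jWeight v = x} := by
    obtain ⟨h0, h1⟩ := jWeight_mem_Ioo_of_notMem huM
    refine Icc_subset_of_four_mul_mul_one_sub_mem ⟨u, hu, rfl⟩ h0 h1 ?_
    rintro _ ⟨v, hv, rfl⟩ t ht
    exact exists_mem_jWeight_eq hlt.le hv ht
  refine (Subgroup.eq_top_iff' H).2 fun v => ?_
  by_cases hv : v ∈ complexJSubgroup
  · exact hlt.le hv
  · obtain ⟨w, hw, hwv⟩ := hX (Set.Ioo_subset_Icc_self (jWeight_mem_Ioo_of_notMem hv))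
    exact mem_of_jWeight_eq hlt.le hw hv hwv

end Quaternion

/-- The subgroup `ℂ* ∪ ℂ*·j` of the multiplicative group `ℍ*` of the real quaternions
is a solvable (indeed metabelian) maximal subgroup of `ℍ*`. -/
theorem quaternion_solvable_maximal_subgroup :
    ∃ M : Subgroup (Quaternion ℝ)ˣ,
      -- the underlying set is ℂ* ∪ ℂ*·j, where ℂ = ℝ + ℝ·i ⊆ ℍ
      ((M : Set (Quaternion ℝ)ˣ) = {u : (Quaternion ℝ)ˣ |
        ((u : Quaternion ℝ).imJ = 0 ∧ (u : Quaternion ℝ).imK = 0) ∨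
        ∃ c : Quaternion ℝ, (c.imJ = 0 ∧ c.imK = 0) ∧
          (u : Quaternion ℝ) = c * quaternionJ}) ∧
      -- M is solvable, indeed metabelian
      IsSolvable ↥M ∧
      (∀ a b c d : ↥M, ⁅⁅a, b⁆, ⁅c, d⁆⁆ = 1) ∧
      -- M is a maximal subgroup of ℍ*
      M ≠ ⊤ ∧ (∀ H : Subgroup (Quaternion ℝ)ˣ, M ≤ H → H = M ∨ H = ⊤) :=
  ⟨Quaternion.complexJSubgroup, Quaternion.coe_complexJSubgroup,
    Quaternion.isSolvable_complexJSubgroup, Quaternion.commutatorElement_commutatorElement_eq_one,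
    Quaternion.isCoatom_complexJSubgroup.1,
    fun H hMH => (eq_or_lt_of_le hMH).imp Eq.symm (Quaternion.isCoatom_complexJSubgroup.2 H)⟩
end
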